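/- On the interval Ω = (−1,1) ⊂ ℝ, the function u₂(x) = ½x² − ½ vanishes at x = ±1 and is a viscosity solution of (u')²u'' − |u'|² = 0 on (−1,1), yet u₂ is not an absolute minimizer for H(p,z) = ½p² − z on (−1,1): indeed esssup_{x ∈ (−1,1)} (½(u₂'(x))² − u₂(x)) = ½ > 0 = esssup_{x ∈ (−1,1)} (½·0² − 0), while the zero function has the same boundary values. -/

import Mathlib

open Set MeasureTheory

noncomputable section

/-- `u` is a viscosity subsolution of `(u')²u'' - |u'|² = 0` on `Ω ⊆ ℝ`. -/
def IsSubsol1 (Ω : Set ℝ) (u : ℝ → ℝ) : Prop :=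
  ∀ φ : ℝ → ℝ, ContDiff ℝ 2 φ → ∀ x₀ ∈ Ω,
    IsLocalMaxOn (fun x => u x - φ x) Ω x₀ →
    (deriv φ x₀) ^ 2 * deriv (deriv φ) x₀ - |deriv φ x₀| ^ 2 ≥ 0

/-- `u` is a viscosity supersolution of `(u')²u'' - |u'|² = 0` on `Ω ⊆ ℝ`. -/
def IsSupersol1 (Ω : Set ℝ) (u : ℝ → ℝ) : Prop :=
  ∀ φ : ℝ → ℝ, ContDiff ℝ 2 φ → ∀ x₀ ∈ Ω,
    IsLocalMinOn (fun x => u x - φ x) Ω x₀ →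
    (deriv φ x₀) ^ 2 * deriv (deriv φ) x₀ - |deriv φ x₀| ^ 2 ≤ 0

/-- `u` is a viscosity solution of `(u')²u'' - |u'|² = 0` on `Ω ⊆ ℝ`. -/
def IsSol1 (Ω : Set ℝ) (u : ℝ → ℝ) : Prop :=
  IsSubsol1 Ω u ∧ IsSupersol1 Ω u

/-- `u` is an absolute minimizer for the Hamiltonian `H = H(p, z)` on `Ω ⊆ ℝ`. -/
def IsAbsMin1 (H : ℝ → ℝ → ℝ) (Ω : Set ℝ) (u : ℝ → ℝ) : Prop :=
  ∀ V : Set ℝ, IsOpen V → closure V ⊆ Ω →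
    ∀ v : ℝ → ℝ, (∃ K : NNReal, LipschitzOnWith K v (closure V)) →
      (∀ x ∈ frontier V, v x = u x) →
      essSup (fun x => H (deriv u x) (u x)) (volume.restrict V) ≤
        essSup (fun x => H (deriv v x) (v x)) (volume.restrict V)

/-!
`u₂ = ½x² - ½` is a classical solution: `u₂' = x`, `u₂'' = 1`, so `(u₂')²u₂'' - (u₂')² = 0`.
A classical solution is a viscosity solution because the operator `p²X - p²` is nondecreasing
in `X`: at a local maximum of `u - φ` the second-order test gives `φ' = u'` and `φ'' ≥ u''`.
On the other hand the energy `½(u₂')² - u₂` is identically `½`. Since competitors must live on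
sets compactly contained in `(-1, 1)`, take `V = (-½, ½)` and the constant `u₂(±½) = -3/8`,
whose energy is `3/8 < ½`.
-/

open Filter Topology

theorem IsLocalMax.deriv_deriv_nonpos {f : ℝ → ℝ} {x₀ : ℝ} (h : IsLocalMax f x₀)
    (hc : ContinuousAt f x₀) : deriv (deriv f) x₀ ≤ 0 := by
  by_contra! hpos
  -- the second-derivative test makes `x₀` a local minimum too, so `f` is locally constant
  have hconst : f =ᶠ[𝓝 x₀] fun _ => f x₀ :=
    (h.and (isLocalMin_of_deriv_deriv_pos hpos h.deriv_eq_zero hc)).mono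
      fun _ hx => le_antisymm hx.1 hx.2
  exact hpos.ne' (by rw [hconst.deriv.deriv_eq, deriv_const', deriv_const])

theorem IsLocalMax.deriv_eq_and_deriv_deriv_le_of_sub {f g : ℝ → ℝ} {x₀ : ℝ}
    (h : IsLocalMax (fun x => f x - g x) x₀)
    (hf : ∀ᶠ x in 𝓝 x₀, DifferentiableAt ℝ f x) (hg : ∀ᶠ x in 𝓝 x₀, DifferentiableAt ℝ g x)
    (hf' : DifferentiableAt ℝ (deriv f) x₀) (hg' : DifferentiableAt ℝ (deriv g) x₀) :
    deriv f x₀ = deriv g x₀ ∧ deriv (deriv f) x₀ ≤ deriv (deriv g) x₀ := by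
  have hderiv : deriv (fun x => f x - g x) =ᶠ[𝓝 x₀] fun x => deriv f x - deriv g x :=
    (hf.and hg).mono fun _ hx => deriv_fun_sub hx.1 hx.2
  have hc : ContinuousAt (fun x => f x - g x) x₀ :=
    hf.self_of_nhds.continuousAt.sub hg.self_of_nhds.continuousAt
  have h₁ := h.deriv_eq_zero
  have h₂ := h.deriv_deriv_nonpos hc
  rw [hderiv.self_of_nhds] at h₁
  rw [hderiv.deriv_eq, deriv_fun_sub hf' hg'] at h₂
  exact ⟨by linarith, by linarith⟩

theorem IsSol1.of_classical {Ω : Set ℝ} {u : ℝ → ℝ} (hΩ : IsOpen Ω)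
    (hu : ∀ x ∈ Ω, DifferentiableAt ℝ u x) (hu' : ∀ x ∈ Ω, DifferentiableAt ℝ (deriv u) x)
    (hsol : ∀ x ∈ Ω, deriv u x ^ 2 * deriv (deriv u) x - |deriv u x| ^ 2 = 0) :
    IsSol1 Ω u := by
  refine ⟨fun φ hφ x₀ hx₀ hmax => ?_, fun φ hφ x₀ hx₀ hmin => ?_⟩ <;>
    have hΩx := hΩ.mem_nhds hx₀ <;>
    have hsol₀ := hsol x₀ hx₀ <;>
    rw [sq_abs] at hsol₀ ⊢
  · obtain ⟨hd, hdd⟩ := (hmax.isLocalMax hΩx).deriv_eq_and_deriv_deriv_le_of_sub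
      (eventually_of_mem hΩx hu) (.of_forall (hφ.differentiable two_ne_zero))
      (hu' x₀ hx₀) (hφ.differentiable_deriv_two x₀)
    rw [← hd]
    nlinarith [mul_nonneg (sq_nonneg (deriv u x₀)) (sub_nonneg.2 hdd)]
  · have hmax : IsLocalMax (fun x => φ x - u x) x₀ := by
      simpa using (hmin.isLocalMin hΩx).neg
    obtain ⟨hd, hdd⟩ := hmax.deriv_eq_and_deriv_deriv_le_of_sub
      (.of_forall (hφ.differentiable two_ne_zero)) (eventually_of_mem hΩx hu)
      (hφ.differentiable_deriv_two x₀) (hu' x₀ hx₀)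
    rw [hd]
    nlinarith [mul_nonneg (sq_nonneg (deriv u x₀)) (sub_nonneg.2 hdd)]

theorem essSup_restrict_Ioo_const {a b : ℝ} (hab : a < b) (c : ℝ) :
    essSup (fun _ => c) (volume.restrict (Ioo a b)) = c :=
  essSup_const c <| by simp [Measure.restrict_eq_zero, hab]

theorem deriv_half_sq_sub_half : deriv (fun x : ℝ => (1 / 2) * x ^ 2 - 1 / 2) = fun x => x := by
  funext x
  have := ((hasDerivAt_pow 2 x).const_mul (1 / 2 : ℝ)).sub_const (1 / 2)
  rw [this.deriv]
  ring

theorem half_sq_deriv_sub_half_sq_sub_half :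
    (fun x => (1 / 2) * (deriv (fun y : ℝ => (1 / 2) * y ^ 2 - 1 / 2) x) ^ 2 -
      ((1 / 2) * x ^ 2 - 1 / 2)) = fun _ => (1 / 2 : ℝ) := by
  funext x
  rw [deriv_half_sq_sub_half]
  ring

theorem isSol1_half_sq_sub_half :
    IsSol1 (Ioo (-1 : ℝ) 1) (fun x => (1 / 2) * x ^ 2 - 1 / 2) := by
  refine .of_classical isOpen_Ioo (fun x _ => by fun_prop) (fun x _ => ?_) (fun x _ => ?_) <;>
    simp only [deriv_half_sq_sub_half, deriv_id'', sq_abs]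
  · fun_prop
  · ring

theorem not_isAbsMin1_half_sq_sub_half :
    ¬ IsAbsMin1 (fun p z => (1 / 2) * p ^ 2 - z) (Ioo (-1 : ℝ) 1)
        (fun x => (1 / 2) * x ^ 2 - 1 / 2) := by
  intro h
  have hV : closure (Ioo (-1 / 2 : ℝ) (1 / 2)) ⊆ Ioo (-1) 1 := by
    rw [closure_Ioo (by norm_num)]
    exact Icc_subset_Ioo (by norm_num) (by norm_num)
  have hbdry : ∀ x ∈ frontier (Ioo (-1 / 2 : ℝ) (1 / 2)),
      (fun _ => (-3 / 8 : ℝ)) x = (1 / 2) * x ^ 2 - 1 / 2 := by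
    rw [frontier_Ioo (by norm_num)]
    rintro x (rfl | rfl) <;> norm_num
  have hle := h _ isOpen_Ioo hV _ ⟨0, (LipschitzWith.const _).lipschitzOnWith⟩ hbdry
  simp only [half_sq_deriv_sub_half_sq_sub_half, deriv_const] at hle
  rw [essSup_restrict_Ioo_const (by norm_num), essSup_restrict_Ioo_const (by norm_num)] at hle
  norm_num at hle

/-- Example I continued: `u₂ = ½x² - ½` vanishes at `±1` and solves the
Aronsson equation on `(-1,1)`, but it is not an absolute minimizer for
`H(p,z) = ½p² - z`: its energy `esssup (½(u₂')² - u₂) = ½ > 0`, while the zero function,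
with the same boundary values, has energy `0`. -/
theorem example_not_absolute_minimizer :
    (fun x : ℝ => (1 / 2) * x ^ 2 - 1 / 2) (-1) = 0 ∧
    (fun x : ℝ => (1 / 2) * x ^ 2 - 1 / 2) 1 = 0 ∧
    IsSol1 (Set.Ioo (-1 : ℝ) 1) (fun x => (1 / 2) * x ^ 2 - 1 / 2) ∧
    ¬ IsAbsMin1 (fun p z => (1 / 2) * p ^ 2 - z) (Set.Ioo (-1 : ℝ) 1)
        (fun x => (1 / 2) * x ^ 2 - 1 / 2) ∧
    essSup
      (fun x => (1 / 2) * (deriv (fun y : ℝ => (1 / 2) * y ^ 2 - 1 / 2) x) ^ 2 -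
        ((1 / 2) * x ^ 2 - 1 / 2))
      (volume.restrict (Set.Ioo (-1 : ℝ) 1)) = 1 / 2 ∧
    (1 / 2 : ℝ) > 0 ∧
    essSup
      (fun x => (1 / 2) * (deriv (fun _ : ℝ => (0 : ℝ)) x) ^ 2 - (0 : ℝ))
      (volume.restrict (Set.Ioo (-1 : ℝ) 1)) = 0 := by
  refine ⟨by norm_num, by norm_num, isSol1_half_sq_sub_half, not_isAbsMin1_half_sq_sub_half,
    ?_, by norm_num, ?_⟩
  · rw [half_sq_deriv_sub_half_sq_sub_half, essSup_restrict_Ioo_const (by norm_num)]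
  · simpa using essSup_restrict_Ioo_const (a := -1) (b := 1) (by norm_num) 0
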